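/- arXiv:1302.3200 — 2 statements merged into one kernel-verified Lean document; each statement's English description precedes it below -/
import Mathlib

section
/- There exists a constant c > 0 such that for every positive integer n, τ(n) ≥ c·n^(4/3); that is, the peeling process on the n × n integer grid requires Ω(n^(4/3)) iterations. -/
/-!
A peeling step removes the vertices of a convex polygon whose vertices lie in `{1,…,n}²`, and
such a polygon has `O(n^{2/3})` vertices; as the grid has `n²` points, at least `Ω(n^{4/3})` steps
are needed.

For the vertex bound, split the vertices into four arcs according to the quadrant containing an
outer normal. After a reflection in the coordinate axes an arc is a chain going right and down,
and by strict concavity its edge vectors `(Δx, -Δy)` are pairwise distinct lattice vectors with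
positive coordinates and total `ℓ¹`-length at most `2n`. At most `r²` of them lie in `[1, r]²` and
each of the others has `ℓ¹`-length more than `r`, so the arc has at most `1 + r² + 2n / (r + 1)`
vertices; take `r = ⌊n^{1/3}⌋`.
-/

/-- Remove from `P` the extreme points (vertices) of its convex hull. -/
noncomputable def peel (P : Set (ℝ × ℝ)) : Set (ℝ × ℝ) :=
  P \ (convexHull ℝ P).extremePoints ℝ

/-- Number of peeling iterations until the set is empty. -/
noncomputable def tau (Q : Set (ℝ × ℝ)) : ℕ :=
  sInf {k : ℕ | peel^[k] Q = ∅}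

/-- The `n × n` integer grid `{1,…,n}²`, viewed in `ℝ²`. -/
def grid (n : ℕ) : Set (ℝ × ℝ) :=
  {p | ∃ a b : ℕ, 1 ≤ a ∧ a ≤ n ∧ 1 ≤ b ∧ b ≤ n ∧ p = ((a : ℝ), (b : ℝ))}

open Set

theorem Fin.sum_succ_sub_castSucc {M : Type*} [AddCommGroup M] :
    ∀ {m : ℕ} (f : Fin (m + 1) → M),
      ∑ i : Fin m, (f i.succ - f i.castSucc) = f (Fin.last m) - f 0
  | 0, f => by simp
  | m + 1, f => by
    simp only [Fin.sum_univ_succ (n := m), ← Fin.succ_castSucc]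
    rw [Fin.sum_succ_sub_castSucc (fun i => f i.succ)]
    simp

theorem Finset.exists_strictMono_fst {α β : Type*} [LinearOrder α] (A : Finset (α × β))
    (hA : InjOn Prod.fst (A : Set (α × β))) {k : ℕ} (hk : A.card = k) :
    ∃ p : Fin k → α × β, (∀ i, p i ∈ A) ∧ StrictMono (Prod.fst ∘ p) := by
  classical
  have hcard : (A.image Prod.fst).card = k := (Finset.card_image_of_injOn hA).trans hk
  choose p hpA hpx using fun i =>
    Finset.mem_image.1 ((A.image Prod.fst).orderEmbOfFin_mem hcard i)
  refine ⟨p, hpA, fun i j hij => ?_⟩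
  simpa only [Function.comp, hpx] using ((A.image Prod.fst).orderEmbOfFin hcard).strictMono hij

section Peeling

variable {P : Set (ℝ × ℝ)}

theorem peel_subset (P : Set (ℝ × ℝ)) : peel P ⊆ P := sdiff_subset

theorem iterate_peel_subset (P : Set (ℝ × ℝ)) (t : ℕ) : peel^[t] P ⊆ P := by
  induction t with
  | zero => exact subset_rfl
  | succ t ih =>
    exact (Function.iterate_succ_apply' peel t P).trans_subset ((peel_subset _).trans ih)

theorem ncard_peel_add_ncard_extremePoints (hP : P.Finite) :
    (peel P).ncard + ((convexHull ℝ P).extremePoints ℝ).ncard = P.ncard :=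
  ncard_sdiff_add_ncard_of_subset extremePoints_convexHull_subset hP

theorem ncard_peel_le (hP : P.Finite) : (peel P).ncard ≤ P.ncard - 1 := by
  rcases P.eq_empty_or_nonempty with rfl | hne
  · simp [peel]
  have hE : ((convexHull ℝ P).extremePoints ℝ).Nonempty :=
    (hP.isCompact_convexHull (𝕜 := ℝ)).extremePoints_nonempty (hne.mono (subset_convexHull ℝ P))
  have := (ncard_pos (hP.subset extremePoints_convexHull_subset)).2 hE
  have := ncard_peel_add_ncard_extremePoints hP
  omega

theorem iterate_peel_ncard_eq_empty (hP : P.Finite) : peel^[P.ncard] P = ∅ := by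
  have h : ∀ t, (peel^[t] P).ncard ≤ P.ncard - t := by
    intro t
    induction t with
    | zero => simp
    | succ t ih =>
      rw [Function.iterate_succ_apply']
      have := ncard_peel_le (hP.subset (iterate_peel_subset P t))
      omega
  exact (ncard_eq_zero (hP.subset (iterate_peel_subset P _))).1 (by simpa using h P.ncard)

theorem iterate_peel_tau_eq_empty (hP : P.Finite) : peel^[tau P] P = ∅ :=
  Nat.sInf_mem (s := {k | peel^[k] P = ∅}) ⟨_, iterate_peel_ncard_eq_empty hP⟩

theorem ncard_le_tau_mul (hP : P.Finite) {B : ℝ}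
    (hB : ∀ Q ⊆ P, (((convexHull ℝ Q).extremePoints ℝ).ncard : ℝ) ≤ B) :
    (P.ncard : ℝ) ≤ tau P * B := by
  have h : ∀ t : ℕ, (P.ncard : ℝ) ≤ (peel^[t] P).ncard + t * B := by
    intro t
    induction t with
    | zero => simp
    | succ t ih =>
      have hQ := iterate_peel_subset P t
      have hsplit : ((peel (peel^[t] P)).ncard : ℝ) +
          ((convexHull ℝ (peel^[t] P)).extremePoints ℝ).ncard = (peel^[t] P).ncard := by
        exact_mod_cast ncard_peel_add_ncard_extremePoints (hP.subset hQ)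
      rw [Function.iterate_succ_apply']
      push_cast
      linarith [hB _ hQ]
  simpa [iterate_peel_tau_eq_empty hP] using h (tau P)

end Peeling

theorem card_sub_sq_mul_le_sum (V : Finset (ℝ × ℝ))
    (hV : ∀ v ∈ V, ∃ a b : ℤ, 0 < a ∧ 0 < b ∧ v = ((a : ℝ), (b : ℝ))) (r : ℕ) :
    ((V.card : ℝ) - r ^ 2) * (r + 1) ≤ ∑ v ∈ V, (v.1 + v.2) := by
  classical
  set W := V.filter fun v => v.1 ≤ (r : ℝ) ∧ v.2 ≤ (r : ℝ)
  have hW : W.card ≤ r ^ 2 := by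
    have hsub : W ⊆ (Finset.Icc (1 : ℤ) r ×ˢ Finset.Icc (1 : ℤ) r).image
        fun z => ((z.1 : ℝ), (z.2 : ℝ)) := by
      intro v hv
      obtain ⟨hvV, h1, h2⟩ := Finset.mem_filter.1 hv
      obtain ⟨a, b, ha, hb, rfl⟩ := hV v hvV
      simp only at h1 h2
      refine Finset.mem_image.2 ⟨(a, b), ?_, rfl⟩
      simp only [Finset.mem_product, Finset.mem_Icc]
      exact ⟨⟨ha, by exact_mod_cast h1⟩, hb, by exact_mod_cast h2⟩
    have := (Finset.card_le_card hsub).trans Finset.card_image_le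
    simpa [Int.card_Icc, sq] using this
  have hfar : ∀ v ∈ V \ W, (r : ℝ) + 1 ≤ v.1 + v.2 := by
    intro v hv
    obtain ⟨hvV, hvW⟩ := Finset.mem_sdiff.1 hv
    obtain ⟨a, b, ha, hb, rfl⟩ := hV v hvV
    have : ¬ (a ≤ (r : ℤ) ∧ b ≤ (r : ℤ)) := fun h =>
      hvW (Finset.mem_filter.2 ⟨hvV, (by exact_mod_cast h.1 : (a : ℝ) ≤ r),
        (by exact_mod_cast h.2 : (b : ℝ) ≤ r)⟩)
    have : (r : ℤ) + 1 ≤ a + b := by omega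
    show (r : ℝ) + 1 ≤ a + b
    exact_mod_cast this
  have hcard : ((V \ W).card : ℝ) + W.card = V.card := by
    exact_mod_cast Finset.card_sdiff_add_card_eq_card (Finset.filter_subset _ _)
  have hnonneg : ∀ v ∈ V, 0 ≤ v.1 + v.2 := by
    intro v hv
    obtain ⟨a, b, ha, hb, rfl⟩ := hV v hv
    positivity
  calc ((V.card : ℝ) - r ^ 2) * (r + 1) ≤ (V \ W).card * (r + 1) := by
        gcongr
        have : (W.card : ℝ) ≤ r ^ 2 := by exact_mod_cast hW
        linarith
    _ ≤ ∑ v ∈ V \ W, (v.1 + v.2) := by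
        have := Finset.card_nsmul_le_sum _ _ _ hfar
        rwa [nsmul_eq_mul] at this
    _ ≤ ∑ v ∈ V, (v.1 + v.2) :=
        Finset.sum_le_sum_of_subset_of_nonneg Finset.sdiff_subset fun v hv _ => hnonneg v hv

theorem le_three_mul_sq_of_forall_sub_sq_mul_le {x u : ℝ} (hu : 1 ≤ u)
    (h : ∀ r : ℕ, (x - r ^ 2) * (r + 1) ≤ 2 * u ^ 3) : x ≤ 3 * u ^ 2 := by
  have hr : (⌊u⌋₊ : ℝ) ≤ u := Nat.floor_le (by linarith)
  have hr' : u < ⌊u⌋₊ + 1 := Nat.lt_floor_add_one u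
  have hr2 : (⌊u⌋₊ : ℝ) ^ 2 ≤ u ^ 2 := pow_le_pow_left₀ (Nat.cast_nonneg _) hr 2
  by_cases hx : x ≤ ⌊u⌋₊ ^ 2
  · nlinarith
  · have hmul : (x - ⌊u⌋₊ ^ 2) * u ≤ 2 * u ^ 3 := by
      nlinarith [h ⌊u⌋₊]
    nlinarith

/-- For `E` in convex position, the vertices of `convexHull ℝ E` on its upper right boundary arc,
i.e. those with an outer normal in the closed positive quadrant. -/
def upperRightArc (E : Set (ℝ × ℝ)) : Set (ℝ × ℝ) :=
  {e ∈ E | ∀ p ∈ convexHull ℝ (E \ {e}), ¬ e ≤ p}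

section UpperRightArc

variable {E : Set (ℝ × ℝ)} {a b b' c : ℝ × ℝ}

theorem upperRightArc_subset (E : Set (ℝ × ℝ)) : upperRightArc E ⊆ E := sep_subset _ _

theorem snd_lt_of_mem_upperRightArc (ha : a ∈ upperRightArc E) (hb : b ∈ E) (hab : a ≠ b)
    (h : a.1 ≤ b.1) : b.2 < a.2 := by
  by_contra! h'
  exact ha.2 b (subset_convexHull ℝ _ ⟨hb, hab.symm⟩) (Prod.le_def.2 ⟨h, h'⟩)

theorem injOn_fst_upperRightArc (E : Set (ℝ × ℝ)) : InjOn Prod.fst (upperRightArc E) := by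
  intro a ha b hb h
  by_contra hab
  exact (snd_lt_of_mem_upperRightArc ha hb.1 hab h.le).not_gt
    (snd_lt_of_mem_upperRightArc hb ha.1 (Ne.symm hab) h.ge)

theorem above_chord_of_mem_upperRightArc (ha : a ∈ E) (hb : b ∈ upperRightArc E) (hc : c ∈ E)
    (hab : a.1 < b.1) (hbc : b.1 < c.1) :
    (c.2 - a.2) * (b.1 - a.1) < (b.2 - a.2) * (c.1 - a.1) := by
  have hac : 0 < c.1 - a.1 := by linarith
  set t := (b.1 - a.1) / (c.1 - a.1) with ht
  have ha' : a ∈ E \ {b} := ⟨ha, fun h => hab.ne (congrArg Prod.fst h)⟩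
  have hc' : c ∈ E \ {b} := ⟨hc, fun h => hbc.ne' (congrArg Prod.fst h)⟩
  have hq : (1 - t) • a + t • c ∈ convexHull ℝ (E \ {b}) :=
    segment_subset_convexHull ha' hc'
      ⟨1 - t, t, by rw [sub_nonneg, ht, div_le_one hac]; linarith,
        div_nonneg (by linarith) hac.le, by ring, rfl⟩
  have hq1 : ((1 - t) • a + t • c).1 = b.1 := by
    simp only [Prod.fst_add, Prod.smul_fst, smul_eq_mul, ht]
    field_simp
    ring
  have hq2 : ((1 - t) • a + t • c).2 < b.2 := by
    by_contra! h
    exact hb.2 _ hq (Prod.le_def.2 ⟨hq1.ge, h⟩)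
  simp only [Prod.snd_add, Prod.smul_snd, smul_eq_mul] at hq2
  have htc : t * (c.1 - a.1) = b.1 - a.1 := div_mul_cancel₀ _ hac.ne'
  nlinarith [mul_lt_mul_of_pos_right hq2 hac, congrArg (· * (c.2 - a.2)) htc]

/-- If `b + b' = a + c`, the heights of `b` and `b'` above the chord from `a` to `c`, both
positive, would add up to zero. -/
theorem add_ne_add_of_mem_upperRightArc (ha : a ∈ E) (hb : b ∈ upperRightArc E)
    (hb' : b' ∈ upperRightArc E) (hc : c ∈ E) (hab : a.1 < b.1) (hbb' : b.1 ≤ b'.1)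
    (hb'c : b'.1 < c.1) : b + b' ≠ a + c := by
  intro h
  obtain ⟨h1, h2⟩ := Prod.ext_iff.1 h
  simp only [Prod.fst_add, Prod.snd_add] at h1 h2
  have := above_chord_of_mem_upperRightArc ha hb hc hab (hbb'.trans_lt hb'c)
  have := above_chord_of_mem_upperRightArc ha hb' hc (hab.trans_le hbb') hb'c
  have hx : b'.1 = a.1 + c.1 - b.1 := by linarith
  have hy : b'.2 = a.2 + c.2 - b.2 := by linarith
  rw [hx, hy] at this
  linarith

theorem injective_sub_of_strictMono {m : ℕ} (p : Fin (m + 1) → ℝ × ℝ)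
    (hp : ∀ i, p i ∈ upperRightArc E) (hmono : StrictMono (Prod.fst ∘ p)) :
    Function.Injective fun i : Fin m => p i.succ - p i.castSucc := by
  refine Function.Injective.of_lt_imp_ne fun i j hij hpij => ?_
  refine add_ne_add_of_mem_upperRightArc (hp i.castSucc).1 (hp i.succ) (hp j.castSucc)
    (hp j.succ).1 (hmono i.castSucc_lt_succ)
    (hmono.monotone (Fin.succ_le_castSucc_iff.2 hij)) (hmono j.castSucc_lt_succ) ?_
  rw [← sub_eq_zero] at hpij ⊢
  rw [← hpij]
  abel

variable (hint : ∀ e ∈ E, ∃ x y : ℤ, e = ((x : ℝ), (y : ℝ))) {N : ℕ}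
  (hbox : ∀ e ∈ E, ∀ f ∈ E, |e.1 - f.1| ≤ N ∧ |e.2 - f.2| ≤ N)
include hint hbox

theorem sub_sq_mul_le_of_strictMono {m : ℕ} (p : Fin (m + 1) → ℝ × ℝ)
    (hp : ∀ i, p i ∈ upperRightArc E) (hmono : StrictMono (Prod.fst ∘ p)) (r : ℕ) :
    ((m : ℝ) - r ^ 2) * (r + 1) ≤ 2 * N := by
  classical
  set d : Fin m → ℝ × ℝ := fun i =>
    ((p i.succ).1 - (p i.castSucc).1, (p i.castSucc).2 - (p i.succ).2) with hd
  have hd_inj : Function.Injective d := fun i j h => by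
    refine injective_sub_of_strictMono p hp hmono (Prod.ext ?_ ?_)
    · simpa [hd] using congrArg Prod.fst h
    · have := congrArg Prod.snd h
      simp only [hd] at this
      simp only [Prod.snd_sub]
      linarith
  have hd_pos : ∀ i, ∃ a b : ℤ, 0 < a ∧ 0 < b ∧ d i = ((a : ℝ), (b : ℝ)) := by
    intro i
    have h1 : (p i.castSucc).1 < (p i.succ).1 := hmono i.castSucc_lt_succ
    have h2 := snd_lt_of_mem_upperRightArc (hp i.castSucc) (hp i.succ).1
      (fun h => h1.ne (congrArg Prod.fst h)) h1.le
    obtain ⟨x, y, hxy⟩ := hint _ (hp i.castSucc).1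
    obtain ⟨x', y', hxy'⟩ := hint _ (hp i.succ).1
    rw [hxy, hxy'] at h1 h2
    simp only at h1 h2
    refine ⟨x' - x, y - y', by exact_mod_cast sub_pos.2 h1, by exact_mod_cast sub_pos.2 h2, ?_⟩
    simp [hd, hxy, hxy']
  have hsum : ∑ i, ((d i).1 + (d i).2) ≤ 2 * N := by
    have htel : ∑ i, ((d i).1 + (d i).2) =
        ((p (Fin.last m)).1 - (p (Fin.last m)).2) - ((p 0).1 - (p 0).2) := by
      rw [← Fin.sum_succ_sub_castSucc fun i => (p i).1 - (p i).2]
      exact Finset.sum_congr rfl fun i _ => by simp only [hd]; ring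
    have hb := hbox _ (hp (Fin.last m)).1 _ (hp 0).1
    rw [abs_le, abs_le] at hb
    linarith
  have := card_sub_sq_mul_le_sum (Finset.univ.image d)
    (fun v hv => by obtain ⟨i, -, rfl⟩ := Finset.mem_image.1 hv; exact hd_pos i) r
  rw [Finset.card_image_of_injective _ hd_inj, Finset.sum_image fun i _ j _ h => hd_inj h,
    Finset.card_univ, Fintype.card_fin] at this
  linarith

theorem ncard_upperRightArc_le (hE : E.Finite) {u : ℝ} (hu : 1 ≤ u) (hN : (N : ℝ) ≤ u ^ 3) :
    ((upperRightArc E).ncard : ℝ) ≤ 4 * u ^ 2 := by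
  have hA := hE.subset (upperRightArc_subset E)
  suffices h : ∀ r : ℕ, (((upperRightArc E).ncard : ℝ) - 1 - r ^ 2) * (r + 1) ≤ 2 * u ^ 3 by
    nlinarith [le_three_mul_sq_of_forall_sub_sq_mul_le hu h]
  intro r
  refine le_trans ?_ (by linarith : 2 * (N : ℝ) ≤ 2 * u ^ 3)
  rw [ncard_eq_toFinset_card _ hA]
  rcases hk : hA.toFinset.card with _ | m
  · push_cast
    nlinarith [(N.cast_nonneg : (0 : ℝ) ≤ N)]
  obtain ⟨p, hpA, hmono⟩ := hA.toFinset.exists_strictMono_fst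
    (by simpa using injOn_fst_upperRightArc E) hk
  have := sub_sq_mul_le_of_strictMono hint hbox p (fun i => by simpa using hpA i) hmono r
  push_cast
  linarith

end UpperRightArc

/-- For `s ∈ signPairs`, the maps `p ↦ s * p` are the reflections of the plane in its coordinate
axes (and the identity). -/
noncomputable def signPairs : Finset (ℝ × ℝ) := {1, -1} ×ˢ {1, -1}

section SignPairs

variable {s : ℝ × ℝ} {E : Set (ℝ × ℝ)}

theorem mem_signPairs : s ∈ signPairs ↔ (s.1 = 1 ∨ s.1 = -1) ∧ (s.2 = 1 ∨ s.2 = -1) := by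
  simp [signPairs]

theorem mul_left_injective_of_mem_signPairs (hs : s ∈ signPairs) :
    Function.Injective (s * ·) := fun p q h => by
  have hss : s * s = 1 := by
    obtain ⟨h1 | h1, h2 | h2⟩ := mem_signPairs.1 hs <;> ext <;> simp [h1, h2]
  simpa [← mul_assoc, hss] using congrArg (s * ·) h

theorem exists_int_of_mem_image_mul (hs : s ∈ signPairs)
    (hint : ∀ e ∈ E, ∃ x y : ℤ, e = ((x : ℝ), (y : ℝ))) :
    ∀ e ∈ (s * ·) '' E, ∃ x y : ℤ, e = ((x : ℝ), (y : ℝ)) := by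
  rintro _ ⟨e, he, rfl⟩
  obtain ⟨x, y, rfl⟩ := hint e he
  obtain ⟨h1 | h1, h2 | h2⟩ := mem_signPairs.1 hs
  exacts [⟨x, y, by ext <;> simp [h1, h2]⟩, ⟨x, -y, by ext <;> simp [h1, h2]⟩,
    ⟨-x, y, by ext <;> simp [h1, h2]⟩, ⟨-x, -y, by ext <;> simp [h1, h2]⟩]

theorem abs_sub_le_of_mem_image_mul (hs : s ∈ signPairs) {N : ℝ}
    (hbox : ∀ e ∈ E, ∀ f ∈ E, |e.1 - f.1| ≤ N ∧ |e.2 - f.2| ≤ N) :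
    ∀ e ∈ (s * ·) '' E, ∀ f ∈ (s * ·) '' E, |e.1 - f.1| ≤ N ∧ |e.2 - f.2| ≤ N := by
  rintro _ ⟨e, he, rfl⟩ _ ⟨f, hf, rfl⟩
  obtain ⟨h1, h2⟩ : |s.1| = 1 ∧ |s.2| = 1 := by
    obtain ⟨h1 | h1, h2 | h2⟩ := mem_signPairs.1 hs <;> simp [h1, h2]
  simpa only [Prod.fst_mul, Prod.snd_mul, ← mul_sub, abs_mul, h1, h2, one_mul]
    using hbox e he f hf

/-- Separate `e` from `K` by a line; the signs of the coordinates of its normal give `s`. -/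
theorem exists_mem_signPairs_not_mul_le {K : Set (ℝ × ℝ)} (hK : Convex ℝ K) (hKc : IsClosed K)
    {e : ℝ × ℝ} (he : e ∉ K) : ∃ s ∈ signPairs, ∀ p ∈ K, ¬ s * e ≤ s * p := by
  obtain ⟨f, u, hfK, hfe⟩ := geometric_hahn_banach_closed_point hK hKc he
  have hf : ∀ p : ℝ × ℝ, f p = p.1 * f (1, 0) + p.2 * f (0, 1) := by
    intro p
    calc f p = f (p.1 • ((1 : ℝ), (0 : ℝ)) + p.2 • ((0 : ℝ), (1 : ℝ))) := by
          congr 1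
          ext <;> simp
      _ = _ := by rw [map_add, map_smul, map_smul, smul_eq_mul, smul_eq_mul]
  have hsign : ∀ α x y : ℝ, (if 0 ≤ α then 1 else -1) * x ≤ (if 0 ≤ α then 1 else -1) * y →
      α * x ≤ α * y := by
    intro α x y h
    split_ifs at h with hα <;> nlinarith
  refine ⟨(if 0 ≤ f (1, 0) then 1 else -1, if 0 ≤ f (0, 1) then 1 else -1),
    mem_signPairs.2 ⟨by split_ifs <;> simp, by split_ifs <;> simp⟩, fun p hp hle => ?_⟩
  obtain ⟨h1, h2⟩ := Prod.le_def.1 hle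
  have := hsign _ _ _ h1
  have := hsign _ _ _ h2
  have := hfK p hp
  rw [hf] at hfe this
  linarith

theorem exists_mul_mem_upperRightArc (hE : E.Finite) {e : ℝ × ℝ} (he : e ∈ E)
    (hconv : e ∉ convexHull ℝ (E \ {e})) :
    ∃ s ∈ signPairs, s * e ∈ upperRightArc ((s * ·) '' E) := by
  obtain ⟨s, hs, hsep⟩ := exists_mem_signPairs_not_mul_le (convex_convexHull ℝ _)
    (hE.sdiff.isCompact_convexHull (𝕜 := ℝ)).isClosed hconv
  refine ⟨s, hs, mem_image_of_mem _ he, fun q hq => ?_⟩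
  rw [← image_singleton, ← image_sdiff (mul_left_injective_of_mem_signPairs hs)] at hq
  obtain ⟨p, hp, rfl⟩ : q ∈ LinearMap.mulLeft ℝ s '' convexHull ℝ (E \ {e}) := by
    rwa [LinearMap.image_convexHull]
  exact hsep p hp

end SignPairs

theorem ncard_le_of_convexIndependent {E : Set (ℝ × ℝ)} (hE : E.Finite)
    (hind : ConvexIndependent ℝ ((↑) : E → ℝ × ℝ))
    (hint : ∀ e ∈ E, ∃ x y : ℤ, e = ((x : ℝ), (y : ℝ))) {N : ℕ}
    (hbox : ∀ e ∈ E, ∀ f ∈ E, |e.1 - f.1| ≤ N ∧ |e.2 - f.2| ≤ N)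
    {u : ℝ} (hu : 1 ≤ u) (hN : (N : ℝ) ≤ u ^ 3) :
    (E.ncard : ℝ) ≤ 16 * u ^ 2 := by
  classical
  set A : ℝ × ℝ → Set (ℝ × ℝ) := fun s => {e ∈ E | s * e ∈ upperRightArc ((s * ·) '' E)}
  have hcover : E ⊆ ⋃ s ∈ signPairs, A s := by
    intro e he
    obtain ⟨s, hs, h⟩ := exists_mul_mem_upperRightArc hE he
      (convexIndependent_set_iff_notMem_convexHull_sdiff.1 hind e he)
    exact mem_biUnion hs ⟨he, h⟩
  have hA : ∀ s ∈ signPairs, ((A s).ncard : ℝ) ≤ 4 * u ^ 2 := by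
    intro s hs
    have hsE := hE.image (s * ·)
    have hle : (A s).ncard ≤ (upperRightArc ((s * ·) '' E)).ncard :=
      ncard_le_ncard_of_injOn (s * ·) (fun e he => he.2)
        (mul_left_injective_of_mem_signPairs hs).injOn (hsE.subset (upperRightArc_subset _))
    have := ncard_upperRightArc_le (exists_int_of_mem_image_mul hs hint)
      (abs_sub_le_of_mem_image_mul hs hbox) hsE hu hN
    exact le_trans (by exact_mod_cast hle) this
  calc (E.ncard : ℝ) ≤ ∑ s ∈ signPairs, ((A s).ncard : ℝ) := by
        exact_mod_cast (ncard_le_ncard hcover ((signPairs.finite_toSet.biUnion fun s _ =>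
          hE.subset (sep_subset _ _)))).trans (signPairs.set_ncard_biUnion_le A)
    _ ≤ ∑ s ∈ signPairs, 4 * u ^ 2 := Finset.sum_le_sum hA
    _ = 16 * u ^ 2 := by
        rw [Finset.sum_const, signPairs, Finset.card_product,
          Finset.card_pair (by norm_num : (1 : ℝ) ≠ -1)]
        ring

section Grid

theorem grid_eq_image (n : ℕ) : grid n =
    (fun z : ℕ × ℕ => ((z.1 : ℝ), (z.2 : ℝ))) '' (Finset.Icc 1 n ×ˢ Finset.Icc 1 n : Finset _) := by
  ext p
  simp only [grid, mem_ofPred_eq, mem_image, Finset.coe_product, mem_prod, Finset.coe_Icc, mem_Icc,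
    Prod.exists]
  constructor
  · rintro ⟨a, b, h1, h2, h3, h4, rfl⟩
    exact ⟨a, b, ⟨⟨h1, h2⟩, h3, h4⟩, rfl⟩
  · rintro ⟨a, b, ⟨⟨h1, h2⟩, h3, h4⟩, rfl⟩
    exact ⟨a, b, h1, h2, h3, h4, rfl⟩

theorem grid_finite (n : ℕ) : (grid n).Finite := by
  rw [grid_eq_image]
  exact (Finset.finite_toSet _).image _

theorem ncard_grid (n : ℕ) : (grid n).ncard = n ^ 2 := by
  rw [grid_eq_image, ncard_image_of_injective _ fun z w h => by
    simpa [Prod.ext_iff] using h, ncard_coe_finset]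
  simp [sq]

variable {n : ℕ} {p q : ℝ × ℝ}

theorem exists_int_of_mem_grid (hp : p ∈ grid n) : ∃ x y : ℤ, p = ((x : ℝ), (y : ℝ)) := by
  obtain ⟨a, b, -, -, -, -, rfl⟩ := hp
  exact ⟨a, b, by simp⟩

theorem abs_sub_le_of_mem_grid (hp : p ∈ grid n) (hq : q ∈ grid n) :
    |p.1 - q.1| ≤ n ∧ |p.2 - q.2| ≤ n := by
  obtain ⟨a, b, ha, ha', hb, hb', rfl⟩ := hp
  obtain ⟨c, d, hc, hc', hd, hd', rfl⟩ := hq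
  simp only [abs_le]
  refine ⟨⟨?_, ?_⟩, ?_, ?_⟩ <;> (rify at *; linarith)

theorem ncard_extremePoints_le_of_subset_grid {P : Set (ℝ × ℝ)} (hP : P ⊆ grid n)
    {u : ℝ} (hu : 1 ≤ u) (hn : (n : ℝ) ≤ u ^ 3) :
    (((convexHull ℝ P).extremePoints ℝ).ncard : ℝ) ≤ 16 * u ^ 2 := by
  have hE : (convexHull ℝ P).extremePoints ℝ ⊆ grid n := extremePoints_convexHull_subset.trans hP
  exact ncard_le_of_convexIndependent ((grid_finite n).subset hE)
    (convex_convexHull ℝ P).convexIndependent_extremePoints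
    (fun e he => exists_int_of_mem_grid (hE he))
    (fun e he f hf => abs_sub_le_of_mem_grid (hE he) (hE hf)) hu hn

end Grid

/-- The peeling process on the `n × n` grid requires `Ω(n^{4/3})` iterations. -/
theorem tau_grid_lower_bound :
    ∃ c : ℝ, 0 < c ∧ ∀ n : ℕ, 0 < n →
      c * (n : ℝ) ^ ((4 : ℝ) / 3) ≤ (tau (grid n) : ℝ) := by
  refine ⟨1 / 16, by norm_num, fun n hn => ?_⟩
  set u := (n : ℝ) ^ ((1 : ℝ) / 3)
  have hu : 1 ≤ u := Real.one_le_rpow (by exact_mod_cast hn) (by norm_num)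
  have hu3 : u ^ 3 = n := by
    rw [← Real.rpow_natCast, ← Real.rpow_mul n.cast_nonneg]
    norm_num
  have hu4 : (n : ℝ) ^ ((4 : ℝ) / 3) = u ^ 4 := by
    rw [← Real.rpow_natCast, ← Real.rpow_mul n.cast_nonneg]
    norm_num
  have h := ncard_le_tau_mul (grid_finite n) fun Q hQ =>
    ncard_extremePoints_le_of_subset_grid hQ hu hu3.ge
  rw [ncard_grid, Nat.cast_pow, ← hu3] at h
  rw [hu4]
  have hu2 : 0 < u ^ 2 := by positivity
  nlinarith
end

section
/- Let k be a positive integer and run the peeling process on M_k, with iterates Q_0 = M_k, Q_{i+1} = peel(Q_i), and layers C_{i+1} = extremePoints ℝ (convexHull ℝ Q_i). Then every layer satisfies |C_i| ≤ 8. -/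
/-- The set `M_k` of the `4k²` intersection points of the `4k` lines extending
the sides of the concentric squares `S_j = [−3^j/2, 3^j/2]²`, `1 ≤ j ≤ k`. -/
def Mset (k : ℕ) : Set (ℝ × ℝ) :=
  {p | ∃ (ε δ : ℝ) (i j : ℕ), (ε = 1 ∨ ε = -1) ∧ (δ = 1 ∨ δ = -1) ∧
    1 ≤ i ∧ i ≤ k ∧ 1 ≤ j ∧ j ≤ k ∧ p = (ε * 3 ^ i / 2, δ * 3 ^ j / 2)}

/-!
Record a point `(±3^a/2, ±3^b/2)` of `M_k` by its exponent pair `(a, b)`. Every stage of the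
peeling is `M_L` with its outer frame `max a b = L` cut down to the pairs whose other exponent is
at most `m`. The convex hull of such a stage is the octagon with the eight vertices
`(±3^L/2, ±3^m/2)` and `(±3^m/2, ±3^L/2)`, exposed by the functionals `±x ± y/2` and
`±x/2 ± y`.
No other point is extreme: since the base is `3`, `(x, y)` is the midpoint of `(3x, y)` and
`(-x, y)` (or of `(x, 3y)` and `(x, -y)`), and in the one position `|x| = |y| = 3^(L-1)/2` where
neither pair is available, `(x, y) = ((3x, ry) + (rx, 3y) + (-rx, -ry)) / 3` with
`r = 3^m / 3^(L-1)`. Peeling therefore removes exactly these eight points and lowers `m` by one,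
or passes to the full square `M_(L-1)` when `m = 1`.
-/

theorem notMem_extremePoints_convexHull_of_mem_openSegment {𝕜 E : Type*} [Field 𝕜]
    [PartialOrder 𝕜] [AddCommGroup E] [Module 𝕜 E] {D : Set E} {p x y : E}
    (hx : x ∈ convexHull 𝕜 D) (hy : y ∈ convexHull 𝕜 D) (hp : p ∈ openSegment 𝕜 x y)
    (hne : x ≠ p) : p ∉ (convexHull 𝕜 D).extremePoints 𝕜 :=
  fun h ↦ hne (h.2 hx hy hp)

section Convexity

variable {𝕜 E : Type*} [Field 𝕜] [LinearOrder 𝕜] [IsStrictOrderedRing 𝕜]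
  [AddCommGroup E] [Module 𝕜 E]

theorem convex_insert_setOf_lt (f : E →ₗ[𝕜] 𝕜) (v : E) :
    Convex 𝕜 (insert v {x | f x < f v}) := by
  have combo : ∀ {y : E} {a b : 𝕜}, 0 < b → a + b = 1 → f y < f v →
      f (a • v + b • y) < f v := by
    intro y a b hb hab hy
    have hv : (a + b) * f v = f v := by rw [hab, one_mul]
    simp only [map_add, map_smul, smul_eq_mul]
    linarith [mul_lt_mul_of_pos_left hy hb]
  rintro x hx y hy a b ha hb hab
  rcases hx with rfl | hx <;> rcases hy with rfl | hy
  · exact Or.inl (by rw [← add_smul, hab, one_smul])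
  · rcases hb.eq_or_lt with rfl | hb
    · exact Or.inl (by simp [show a = 1 by linarith])
    · exact Or.inr (combo hb hab hy)
  · rcases ha.eq_or_lt with rfl | ha
    · exact Or.inl (by simp [show b = 1 by linarith])
    · rw [add_comm] at hab ⊢
      exact Or.inr (combo ha hab hx)
  · exact Or.inr (convex_halfSpace_lt f.isLinear _ hx hy ha hb hab)

theorem mem_extremePoints_convexHull_of_forall_lt {D : Set E} {v : E} (f : E →ₗ[𝕜] 𝕜)
    (hv : v ∈ D) (h : ∀ y ∈ D, y ≠ v → f y < f v) :
    v ∈ (convexHull 𝕜 D).extremePoints 𝕜 := by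
  have hK : convexHull 𝕜 D ⊆ insert v {x | f x < f v} :=
    convexHull_min (fun y hy ↦ (eq_or_ne y v).imp id (h y hy)) (convex_insert_setOf_lt f v)
  refine ⟨subset_convexHull 𝕜 D hv, fun x hx y hy ⟨a, b, ha, hb, hab, hxy⟩ ↦ ?_⟩
  by_contra hne
  have hfx : f x < f v := (hK hx).resolve_left hne
  have hfy : f y ≤ f v := (hK hy).elim (fun h ↦ h ▸ le_rfl) le_of_lt
  have hfv : a * f x + b * f y = (a + b) * f v := by
    rw [hab, one_mul, ← hxy, map_add, map_smul, map_smul, smul_eq_mul, smul_eq_mul]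
  linarith [mul_lt_mul_of_pos_left hfx ha, mul_le_mul_of_nonneg_left hfy hb.le]

end Convexity

section Sign

variable {α : Type*} [Ring α] [LinearOrder α] [IsStrictOrderedRing α]

theorem sign_mul_le_abs (x y : α) : (SignType.sign x : α) * y ≤ |y| := by
  rcases lt_trichotomy x 0 with hx | rfl | hx <;> simp [*, neg_le_abs, le_abs_self]

theorem eq_of_sign_mul_eq_abs {x y : α} (h : (SignType.sign x : α) * y = |x|)
    (habs : |y| = |x|) : y = x := by
  rcases lt_trichotomy x 0 with hx | rfl | hx
  · simpa [hx, abs_of_neg] using h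
  · simpa using habs
  · simpa [hx, abs_of_pos] using h

end Sign

theorem mem_extremePoints_convexHull_of_weighted_abs_lt {D : Set (ℝ × ℝ)} {v : ℝ × ℝ}
    {α β : ℝ} (hα : 0 < α) (hβ : 0 < β) (hv : v ∈ D)
    (h : ∀ p ∈ D, (|p.1|, |p.2|) ≠ (|v.1|, |v.2|) →
      α * |p.1| + β * |p.2| < α * |v.1| + β * |v.2|) :
    v ∈ (convexHull ℝ D).extremePoints ℝ := by
  let f : ℝ × ℝ →ₗ[ℝ] ℝ :=
    (α * SignType.sign v.1) • LinearMap.fst ℝ ℝ ℝ +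
      (β * SignType.sign v.2) • LinearMap.snd ℝ ℝ ℝ
  have hf : ∀ p, f p = α * (SignType.sign v.1 * p.1) + β * (SignType.sign v.2 * p.2) := by
    intro p; simp [f]; ring
  refine mem_extremePoints_convexHull_of_forall_lt f hv fun p hp hne ↦ ?_
  have h1 := mul_le_mul_of_nonneg_left (sign_mul_le_abs v.1 p.1) hα.le
  have h2 := mul_le_mul_of_nonneg_left (sign_mul_le_abs v.2 p.2) hβ.le
  rw [hf, hf, sign_mul_self, sign_mul_self]
  by_contra! hle
  have habs : (|p.1|, |p.2|) = (|v.1|, |v.2|) := by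
    by_contra hne'
    linarith [h p hp hne']
  simp only [Prod.mk.injEq] at habs
  refine hne (Prod.ext (eq_of_sign_mul_eq_abs ?_ habs.1) (eq_of_sign_mul_eq_abs ?_ habs.2))
  · nlinarith
  · nlinarith

theorem exists_sign_of_abs_eq {x r : ℝ} (h : |x| = r) :
    ∃ ε : ℝ, (ε = 1 ∨ ε = -1) ∧ x = ε * r := by
  rcases abs_choice x with hx | hx
  · exact ⟨1, Or.inl rfl, by rw [← h, hx, one_mul]⟩
  · exact ⟨-1, Or.inr rfl, by rw [← h, hx]; ring⟩

theorem abs_three_mul_of_abs_eq {x : ℝ} {n : ℕ} (h : |x| = 3 ^ n / 2) :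
    |3 * x| = 3 ^ (n + 1) / 2 := by
  rw [abs_mul, h, abs_of_pos three_pos, pow_succ]; ring

def gridPoints (S : Set (ℕ × ℕ)) : Set (ℝ × ℝ) :=
  {p | ∃ e ∈ S, |p.1| = 3 ^ e.1 / 2 ∧ |p.2| = 3 ^ e.2 / 2}

theorem three_pow_div_two_injective : Function.Injective fun n : ℕ ↦ (3 : ℝ) ^ n / 2 :=
  fun _ _ h ↦ pow_right_injective₀ three_pos (by norm_num) ((div_left_inj' two_ne_zero).1 h)

theorem gridPoints_sdiff (S T : Set (ℕ × ℕ)) :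
    gridPoints S \ gridPoints T = gridPoints (S \ T) := by
  ext p
  constructor
  · rintro ⟨⟨e, he, h1, h2⟩, hT⟩
    exact ⟨e, ⟨he, fun heT ↦ hT ⟨e, heT, h1, h2⟩⟩, h1, h2⟩
  · rintro ⟨e, ⟨he, heT⟩, h1, h2⟩
    refine ⟨⟨e, he, h1, h2⟩, fun ⟨e', he', h1', h2'⟩ ↦ heT ?_⟩
    obtain rfl : e = e' := Prod.ext (three_pow_div_two_injective (h1.symm.trans h1'))
      (three_pow_div_two_injective (h2.symm.trans h2'))
    exact he'

theorem gridPoints_union (S T : Set (ℕ × ℕ)) :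
    gridPoints (S ∪ T) = gridPoints S ∪ gridPoints T := by
  ext p
  simp only [gridPoints, Set.mem_union, Set.mem_ofPred_eq, or_and_right, exists_or]

theorem gridPoints_singleton (a b : ℕ) :
    gridPoints {(a, b)} = {3 ^ a / 2, -(3 ^ a / 2)} ×ˢ {3 ^ b / 2, -(3 ^ b / 2)} := by
  ext p
  simp [gridPoints, abs_eq (by positivity : (0 : ℝ) ≤ 3 ^ a / 2),
    abs_eq (by positivity : (0 : ℝ) ≤ 3 ^ b / 2)]

theorem ncard_gridPoints_singleton_le (e : ℕ × ℕ) : (gridPoints {e}).ncard ≤ 4 := by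
  have pair_le : ∀ x y : ℝ, ({x, y} : Set ℝ).ncard ≤ 2 := fun x y ↦
    (Set.ncard_insert_le x {y}).trans (by rw [Set.ncard_singleton])
  rw [gridPoints_singleton, Set.ncard_prod]
  exact Nat.mul_le_mul (pair_le _ _) (pair_le _ _)

theorem ncard_gridPoints_pair_le (e e' : ℕ × ℕ) : (gridPoints {e, e'}).ncard ≤ 8 := by
  rw [Set.insert_eq, gridPoints_union]
  exact (Set.ncard_union_le _ _).trans
    (Nat.add_le_add (ncard_gridPoints_singleton_le e) (ncard_gridPoints_singleton_le e'))

section Moves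

variable {S : Set (ℕ × ℕ)} {p : ℝ × ℝ} {a b : ℕ}

theorem notMem_extremePoints_of_succ_fst_mem (hab : (a, b) ∈ S) (hab' : (a + 1, b) ∈ S)
    (h1 : |p.1| = 3 ^ a / 2) (h2 : |p.2| = 3 ^ b / 2) :
    p ∉ (convexHull ℝ (gridPoints S)).extremePoints ℝ := by
  have hp1 : p.1 ≠ 0 := abs_pos.1 (h1 ▸ by positivity)
  refine notMem_extremePoints_convexHull_of_mem_openSegment
    (x := (-p.1, p.2)) (y := (3 * p.1, p.2))
    (subset_convexHull ℝ _ ⟨(a, b), hab, by rwa [abs_neg], h2⟩)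
    (subset_convexHull ℝ _ ⟨(a + 1, b), hab', abs_three_mul_of_abs_eq h1, h2⟩)
    ⟨1 / 2, 1 / 2, by norm_num, by norm_num, by norm_num,
      Prod.ext (by simp; ring) (by simp; ring)⟩
    fun h ↦ hp1 (by linarith [congrArg Prod.fst h])

theorem notMem_extremePoints_of_succ_snd_mem (hab : (a, b) ∈ S) (hab' : (a, b + 1) ∈ S)
    (h1 : |p.1| = 3 ^ a / 2) (h2 : |p.2| = 3 ^ b / 2) :
    p ∉ (convexHull ℝ (gridPoints S)).extremePoints ℝ := by
  have hp2 : p.2 ≠ 0 := abs_pos.1 (h2 ▸ by positivity)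
  refine notMem_extremePoints_convexHull_of_mem_openSegment
    (x := (p.1, -p.2)) (y := (p.1, 3 * p.2))
    (subset_convexHull ℝ _ ⟨(a, b), hab, h1, by rwa [abs_neg]⟩)
    (subset_convexHull ℝ _ ⟨(a, b + 1), hab', h1, abs_three_mul_of_abs_eq h2⟩)
    ⟨1 / 2, 1 / 2, by norm_num, by norm_num, by norm_num,
      Prod.ext (by simp; ring) (by simp; ring)⟩
    fun h ↦ hp2 (by linarith [congrArg Prod.snd h])

theorem notMem_extremePoints_of_diagonal {n m : ℕ} (hA : (n + 1, m) ∈ S)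
    (hB : (m, n + 1) ∈ S) (hC : (m, m) ∈ S) (h1 : |p.1| = 3 ^ n / 2) (h2 : |p.2| = 3 ^ n / 2) :
    p ∉ (convexHull ℝ (gridPoints S)).extremePoints ℝ := by
  set r : ℝ := 3 ^ m / 3 ^ n with hr
  have hr0 : 0 < r := by positivity
  have abs_r_mul : ∀ {x : ℝ}, |x| = 3 ^ n / 2 → |r * x| = 3 ^ m / 2 := fun hx ↦ by
    rw [abs_mul, hx, abs_of_pos hr0, hr]; field_simp
  have hp1 : p.1 ≠ 0 := abs_pos.1 (h1 ▸ by positivity)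
  have hA' : (3 * p.1, r * p.2) ∈ gridPoints S :=
    ⟨_, hA, abs_three_mul_of_abs_eq h1, abs_r_mul h2⟩
  have hB' : (r * p.1, 3 * p.2) ∈ gridPoints S :=
    ⟨_, hB, abs_r_mul h1, abs_three_mul_of_abs_eq h2⟩
  have hmid : (1 / 2 : ℝ) • (3 * p.1, r * p.2) + (1 / 2 : ℝ) • (r * p.1, 3 * p.2) ∈
      convexHull ℝ (gridPoints S) :=
    convex_convexHull ℝ _ (subset_convexHull ℝ _ hA') (subset_convexHull ℝ _ hB')
      (by norm_num) (by norm_num) (by norm_num)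
  refine notMem_extremePoints_convexHull_of_mem_openSegment (x := (-(r * p.1), -(r * p.2)))
    (subset_convexHull ℝ _ ⟨_, hC, by rw [abs_neg]; exact abs_r_mul h1,
      by rw [abs_neg]; exact abs_r_mul h2⟩) hmid
    ⟨1 / 3, 2 / 3, by norm_num, by norm_num, by norm_num,
      Prod.ext (by simp; ring) (by simp; ring)⟩
    fun h ↦ hp1 (by nlinarith [congrArg Prod.fst h])

end Moves

def clippedSquare (L m : ℕ) : Set (ℕ × ℕ) :=
  {e | 1 ≤ e.1 ∧ e.1 ≤ L ∧ 1 ≤ e.2 ∧ e.2 ≤ L ∧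
    (e.1 = L → e.2 ≤ m) ∧ (e.2 = L → e.1 ≤ m)}

theorem Mset_eq_gridPoints (k : ℕ) : Mset k = gridPoints (clippedSquare k k) := by
  ext p
  constructor
  · rintro ⟨ε, δ, i, j, hε, hδ, hi, hik, hj, hjk, rfl⟩
    have abs_sign_mul :
        ∀ {s : ℝ} (n : ℕ), (s = 1 ∨ s = -1) → |s * 3 ^ n / 2| = 3 ^ n / 2 := by
      rintro s n (rfl | rfl) <;> simp [abs_div]
    exact ⟨(i, j), ⟨hi, hik, hj, hjk, fun _ ↦ hjk, fun _ ↦ hik⟩,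
      abs_sign_mul i hε, abs_sign_mul j hδ⟩
  · rintro ⟨⟨i, j⟩, ⟨hi, hik, hj, hjk, -, -⟩, h1, h2⟩
    obtain ⟨ε, hε, h1⟩ := exists_sign_of_abs_eq h1
    obtain ⟨δ, hδ, h2⟩ := exists_sign_of_abs_eq h2
    exact ⟨ε, δ, i, j, hε, hδ, hi, hik, hj, hjk, Prod.ext (h1.trans (mul_div_assoc ..).symm)
      (h2.trans (mul_div_assoc ..).symm)⟩

theorem swap_mem_clippedSquare {L m : ℕ} {e : ℕ × ℕ} (he : e ∈ clippedSquare L m) :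
    e.swap ∈ clippedSquare L m := by
  obtain ⟨h1, h2, h3, h4, h5, h6⟩ := he
  exact ⟨h3, h4, h1, h2, h6, h5⟩

theorem clippedSquare_sdiff_corners {L m : ℕ} (hm : 2 ≤ m) :
    clippedSquare L m \ {(L, m), (m, L)} = clippedSquare L (m - 1) := by
  ext ⟨a, b⟩
  simp only [clippedSquare, Set.mem_sdiff, Set.mem_ofPred_eq, Set.mem_insert_iff,
    Set.mem_singleton_iff, Prod.mk.injEq]
  omega

theorem clippedSquare_one_sdiff_corners (L : ℕ) :
    clippedSquare L 1 \ {(L, 1), (1, L)} = clippedSquare (L - 1) (L - 1) := by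
  ext ⟨a, b⟩
  simp only [clippedSquare, Set.mem_sdiff, Set.mem_ofPred_eq, Set.mem_insert_iff,
    Set.mem_singleton_iff, Prod.mk.injEq]
  omega

theorem two_mul_three_pow_add_three_pow_lt {L m a b : ℕ} (hab : (a, b) ∈ clippedSquare L m)
    (hne : (a, b) ≠ (L, m)) : 2 * (3 : ℝ) ^ a + 3 ^ b < 2 * 3 ^ L + 3 ^ m := by
  simp only [clippedSquare, Set.mem_ofPred_eq] at hab
  obtain ⟨-, haL, -, hbL, hb, -⟩ := hab
  have hbL' : (3 : ℝ) ^ b ≤ 3 ^ L := pow_le_pow_right₀ (by norm_num) hbL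
  rcases haL.lt_or_eq with haL | haL
  · have h3a : (3 : ℝ) ^ a * 3 ≤ 3 ^ L :=
      pow_succ (3 : ℝ) a ▸ pow_le_pow_right₀ (by norm_num) haL
    linarith [pow_pos (three_pos : (0 : ℝ) < 3) a, pow_pos (three_pos : (0 : ℝ) < 3) m]
  · have hbm : b < m := (hb haL).lt_of_ne fun h ↦ hne (by rw [haL, h])
    subst haL
    linarith [pow_lt_pow_right₀ (by norm_num : (1 : ℝ) < 3) hbm]

theorem extremePoints_convexHull_gridPoints_clippedSquare {L m : ℕ} (hm : 1 ≤ m)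
    (hmL : m ≤ L) :
    (convexHull ℝ (gridPoints (clippedSquare L m))).extremePoints ℝ =
      gridPoints {(L, m), (m, L)} := by
  apply subset_antisymm
  · intro p hp
    obtain ⟨⟨a, b⟩, hab, h1, h2⟩ := extremePoints_convexHull_subset hp
    by_contra hcorner
    have hne : (a, b) ∉ ({(L, m), (m, L)} : Set (ℕ × ℕ)) :=
      fun h ↦ hcorner ⟨_, h, h1, h2⟩
    by_cases hx : (a + 1, b) ∈ clippedSquare L m
    · exact notMem_extremePoints_of_succ_fst_mem hab hx h1 h2 hp
    by_cases hy : (a, b + 1) ∈ clippedSquare L m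
    · exact notMem_extremePoints_of_succ_snd_mem hab hy h1 h2 hp
    simp only [clippedSquare, Set.mem_ofPred_eq, Set.mem_insert_iff, Set.mem_singleton_iff,
      Prod.mk.injEq] at hab hne hx hy
    obtain ⟨n, rfl, rfl, rfl⟩ : ∃ n, a = n ∧ b = n ∧ L = n + 1 :=
      ⟨a, rfl, by omega, by omega⟩
    refine notMem_extremePoints_of_diagonal (m := m) ?_ ?_ ?_ h1 h2 hp <;>
      simp only [clippedSquare, Set.mem_ofPred_eq] <;> omega
  · have corner_mem : (L, m) ∈ clippedSquare L m :=
      ⟨by omega, le_rfl, hm, hmL, fun _ ↦ le_rfl, by omega⟩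
    rintro v ⟨e, he | he, h1, h2⟩ <;> subst he
    · refine mem_extremePoints_convexHull_of_weighted_abs_lt two_pos one_pos
        ⟨_, corner_mem, h1, h2⟩ ?_
      rintro p ⟨⟨a, b⟩, hab, h1', h2'⟩ hne
      rw [h1, h2, h1', h2'] at hne ⊢
      have := two_mul_three_pow_add_three_pow_lt hab (by rintro ⟨⟩; exact hne rfl)
      linarith
    · refine mem_extremePoints_convexHull_of_weighted_abs_lt one_pos two_pos
        ⟨_, swap_mem_clippedSquare corner_mem, h1, h2⟩ ?_
      rintro p ⟨⟨a, b⟩, hab, h1', h2'⟩ hne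
      rw [h1, h2, h1', h2'] at hne ⊢
      have := two_mul_three_pow_add_three_pow_lt (swap_mem_clippedSquare hab) (by rintro ⟨⟩; exact hne rfl)
      linarith

theorem peel_gridPoints_clippedSquare {L m : ℕ} (hm : 1 ≤ m) (hmL : m ≤ L) :
    peel (gridPoints (clippedSquare L m)) =
      gridPoints (clippedSquare L m \ {(L, m), (m, L)}) := by
  rw [peel, extremePoints_convexHull_gridPoints_clippedSquare hm hmL, gridPoints_sdiff]

def IsPeelingStage (P : Set (ℝ × ℝ)) : Prop :=
  P = ∅ ∨ ∃ L m, 1 ≤ m ∧ m ≤ L ∧ P = gridPoints (clippedSquare L m)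

theorem isPeelingStage_gridPoints_clippedSquare_self (n : ℕ) :
    IsPeelingStage (gridPoints (clippedSquare n n)) := by
  rcases n.eq_zero_or_pos with rfl | hn
  · left
    ext p
    simp only [gridPoints, clippedSquare, Set.mem_ofPred_eq, Set.mem_empty_iff_false, iff_false]
    omega
  · exact Or.inr ⟨n, n, hn, le_rfl, rfl⟩

theorem IsPeelingStage.peel {P : Set (ℝ × ℝ)} (hP : IsPeelingStage P) :
    IsPeelingStage (peel P) := by
  rcases hP with rfl | ⟨L, m, hm, hmL, rfl⟩
  · exact Or.inl (Set.empty_sdiff _)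
  rw [peel_gridPoints_clippedSquare hm hmL]
  rcases hm.lt_or_eq with hm | rfl
  · rw [clippedSquare_sdiff_corners hm]
    exact Or.inr ⟨L, m - 1, by omega, by omega, rfl⟩
  · rw [clippedSquare_one_sdiff_corners]
    exact isPeelingStage_gridPoints_clippedSquare_self (L - 1)

theorem IsPeelingStage.ncard_extremePoints_le {P : Set (ℝ × ℝ)} (hP : IsPeelingStage P) :
    ((convexHull ℝ P).extremePoints ℝ).ncard ≤ 8 := by
  rcases hP with rfl | ⟨L, m, hm, hmL, rfl⟩
  · simp
  · rw [extremePoints_convexHull_gridPoints_clippedSquare hm hmL]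
    exact ncard_gridPoints_pair_le _ _

theorem layer_card_le_eight_general (k : ℕ) (i : ℕ) :
    ((convexHull ℝ (peel^[i] (Mset k))).extremePoints ℝ).ncard ≤ 8 := by
  suffices IsPeelingStage (peel^[i] (Mset k)) from this.ncard_extremePoints_le
  induction i with
  | zero => simpa [Mset_eq_gridPoints] using isPeelingStage_gridPoints_clippedSquare_self k
  | succ i ih => simpa only [Function.iterate_succ_apply'] using ih.peel

/-- Every convex layer of the peeling process on `M_k` has at most 8 points. -/
theorem layer_card_le_eight (k : ℕ) (hk : 0 < k) (i : ℕ) :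
    ((convexHull ℝ (peel^[i] (Mset k))).extremePoints ℝ).ncard ≤ 8 :=
  layer_card_le_eight_general k i
end
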